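/- Fix x, y ≥ 0 and p ≥ 1, and define F(a, b) := (a^p + b^p + (x+y)^p)^{1/p} − (x^p + a^p)^{1/p} − (y^p + b^p)^{1/p} for a, b ≥ 0. Then F is nonincreasing in a and in b, and F(a, b) ≤ 0 for all a, b ≥ 0. -/
import Mathlib

open Real

/-- Decreasing increments for a concave power function. -/
lemma rpow_increment_le (q : ℝ) (hq0 : 0 < q) (hq1 : q ≤ 1) {s t e : ℝ}
    (hs : 0 ≤ s) (hst : s ≤ t) (he : 0 ≤ e) :
    (t + e) ^ q - t ^ q ≤ (s + e) ^ q - s ^ q := by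
  rcases he.eq_or_lt with rfl | he'
  · simp
  have ht : 0 ≤ t := hs.trans hst
  have hd : 0 < t - s + e := by linarith
  set l : ℝ := e / (t - s + e) with hl
  have hl0 : 0 ≤ l := by positivity
  have hl1 : l ≤ 1 := by
    rw [hl, div_le_one hd]; linarith
  have hf := Real.concaveOn_rpow hq0.le hq1
  have hmem1 : s ∈ Set.Ici (0:ℝ) := hs
  have hmem2 : t + e ∈ Set.Ici (0:ℝ) := by simp; linarith
  have h1 := hf.2 hmem1 hmem2 hl0 (by linarith : (0:ℝ) ≤ 1 - l) (by ring)
  have h2 := hf.2 hmem1 hmem2 (by linarith : (0:ℝ) ≤ 1 - l) hl0 (by ring)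
  have e1 : l • s + (1 - l) • (t + e) = t := by
    simp only [smul_eq_mul, hl]; field_simp; ring
  have e2 : (1 - l) • s + l • (t + e) = s + e := by
    simp only [smul_eq_mul, hl]; field_simp; ring
  rw [e1] at h1
  rw [e2] at h2
  simp only [smul_eq_mul] at h1 h2
  linarith

theorem F_antitone_and_nonpos (x y p : ℝ) (hx : 0 ≤ x) (hy : 0 ≤ y) (hp : 1 ≤ p) :
    (∀ b : ℝ, 0 ≤ b → AntitoneOn (fun a : ℝ =>
        (a ^ p + b ^ p + (x + y) ^ p) ^ (1 / p) - (x ^ p + a ^ p) ^ (1 / p)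
          - (y ^ p + b ^ p) ^ (1 / p)) (Set.Ici 0)) ∧
    (∀ a : ℝ, 0 ≤ a → AntitoneOn (fun b : ℝ =>
        (a ^ p + b ^ p + (x + y) ^ p) ^ (1 / p) - (x ^ p + a ^ p) ^ (1 / p)
          - (y ^ p + b ^ p) ^ (1 / p)) (Set.Ici 0)) ∧
    (∀ a b : ℝ, 0 ≤ a → 0 ≤ b →
        (a ^ p + b ^ p + (x + y) ^ p) ^ (1 / p) - (x ^ p + a ^ p) ^ (1 / p)
          - (y ^ p + b ^ p) ^ (1 / p) ≤ 0) := by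
  have hp0 : 0 < p := by linarith
  have hq0 : 0 < 1 / p := by positivity
  have hq1 : 1 / p ≤ 1 := by
    rw [div_le_one hp0]; linarith
  have hxp : x ^ p ≤ (x + y) ^ p :=
    Real.rpow_le_rpow hx (by linarith) hp0.le
  have hyp : y ^ p ≤ (x + y) ^ p :=
    Real.rpow_le_rpow hy (by linarith) hp0.le
  have hA : ∀ b : ℝ, 0 ≤ b → AntitoneOn (fun a : ℝ =>
      (a ^ p + b ^ p + (x + y) ^ p) ^ (1 / p) - (x ^ p + a ^ p) ^ (1 / p)
        - (y ^ p + b ^ p) ^ (1 / p)) (Set.Ici 0) := by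
    intro b hb a1 ha1 a2 ha2 h12
    simp only [Set.mem_Ici] at ha1 ha2
    have hbp : 0 ≤ b ^ p := Real.rpow_nonneg hb p
    have ha1p : 0 ≤ a1 ^ p := Real.rpow_nonneg ha1 p
    have hxpp : 0 ≤ x ^ p := Real.rpow_nonneg hx p
    have hee : a1 ^ p ≤ a2 ^ p := Real.rpow_le_rpow ha1 h12 hp0.le
    have hk := rpow_increment_le (1 / p) hq0 hq1
      (s := x ^ p + a1 ^ p) (t := a1 ^ p + b ^ p + (x + y) ^ p)
      (e := a2 ^ p - a1 ^ p) (by positivity) (by linarith) (by linarith)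
    have e1 : a1 ^ p + b ^ p + (x + y) ^ p + (a2 ^ p - a1 ^ p)
        = a2 ^ p + b ^ p + (x + y) ^ p := by ring
    have e2 : x ^ p + a1 ^ p + (a2 ^ p - a1 ^ p) = x ^ p + a2 ^ p := by ring
    rw [e1, e2] at hk
    simp only
    linarith
  have hB : ∀ a : ℝ, 0 ≤ a → AntitoneOn (fun b : ℝ =>
      (a ^ p + b ^ p + (x + y) ^ p) ^ (1 / p) - (x ^ p + a ^ p) ^ (1 / p)
        - (y ^ p + b ^ p) ^ (1 / p)) (Set.Ici 0) := by
    intro a ha b1 hb1 b2 hb2 h12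
    simp only [Set.mem_Ici] at hb1 hb2
    have hap : 0 ≤ a ^ p := Real.rpow_nonneg ha p
    have hb1p : 0 ≤ b1 ^ p := Real.rpow_nonneg hb1 p
    have hypp : 0 ≤ y ^ p := Real.rpow_nonneg hy p
    have hee : b1 ^ p ≤ b2 ^ p := Real.rpow_le_rpow hb1 h12 hp0.le
    have hk := rpow_increment_le (1 / p) hq0 hq1
      (s := y ^ p + b1 ^ p) (t := a ^ p + b1 ^ p + (x + y) ^ p)
      (e := b2 ^ p - b1 ^ p) (by positivity) (by linarith) (by linarith)
    have e1 : a ^ p + b1 ^ p + (x + y) ^ p + (b2 ^ p - b1 ^ p)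
        = a ^ p + b2 ^ p + (x + y) ^ p := by ring
    have e2 : y ^ p + b1 ^ p + (b2 ^ p - b1 ^ p) = y ^ p + b2 ^ p := by ring
    rw [e1, e2] at hk
    simp only
    linarith
  refine ⟨hA, hB, ?_⟩
  intro a b ha hb
  have h1 := hA b hb (Set.self_mem_Ici) (Set.mem_Ici.2 ha) ha
  have h2 := hB 0 le_rfl (Set.self_mem_Ici) (Set.mem_Ici.2 hb) hb
  simp only at h1 h2
  have hz : (0:ℝ) ^ p = 0 := Real.zero_rpow hp0.ne'
  have hpq : p * (1 / p) = 1 := by field_simp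
  have hxy0 : ((x + y) ^ p) ^ (1 / p) = x + y := by
    rw [← Real.rpow_mul (by linarith), hpq, Real.rpow_one]
  have hx0 : (x ^ p) ^ (1 / p) = x := by
    rw [← Real.rpow_mul hx, hpq, Real.rpow_one]
  have hy0 : (y ^ p) ^ (1 / p) = y := by
    rw [← Real.rpow_mul hy, hpq, Real.rpow_one]
  have hF00 : ((0:ℝ) ^ p + (0:ℝ) ^ p + (x + y) ^ p) ^ (1 / p)
      - (x ^ p + (0:ℝ) ^ p) ^ (1 / p) - (y ^ p + (0:ℝ) ^ p) ^ (1 / p) = 0 := by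
    rw [hz]
    simp only [add_zero, zero_add]
    rw [hxy0, hx0, hy0]
    ring
  linarith
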